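/- The trivial boundary equation q(x,y,z;a) = a·y·(x−z) with the identity parameter map σ(a) = a satisfies the 3D boundary consistency condition with the bulk equation Q1 with δ=0, Q(u00,u10,u01,u11;a,b) = a(u00−u01)(u10−u11) − b(u00−u10)(u01−u11), for all nonzero parameters a, b. -/

import Mathlib

/-- The bulk quad-graph equation. -/
noncomputable def Qbulk (u00 u10 u01 u11 a b : ℂ) : ℂ :=
  a * (u00 - u01) * (u10 - u11) - b * (u00 - u10) * (u01 - u11)

/-- The boundary equation. -/
noncomputable def qBdry (x y z a : ℂ) : ℂ :=
  a * y * (x - z)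

/-- The parameter map acting on edge labels. -/
noncomputable def sigmaMap (a : ℂ) : ℂ :=
  a

/-!
Each boundary equation `a y (x - z) = 0` has `z`-coefficient `-a y ≠ 0`, so it just copies `x`
to `z`; hence `y2 = y3 = w1 = w2 = x`. What remains is `Q(y1, z1, z2, x; b, a) = 0`, which pins
`w3 = x`. On quads sharing the diagonal `(u, v)`, the equation `Q(u, p, q, v; a, b) = 0` says that
the point `[p - v : u - p]` of `ℙ¹` is the image of `[q - v : u - q]` under `diag(b, a)`; around the
three quads at `y1` these projective maps compose to the identity.
-/

theorem cross_eq_trans {R : Type*} [CommRing R] [NoZeroDivisors R] {p₁ p₂ q₁ q₂ r₁ r₂ : R}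
    (hpq : p₁ * q₂ = p₂ * q₁) (hqr : q₁ * r₂ = q₂ * r₁) (hq : q₁ ≠ 0 ∨ q₂ ≠ 0) :
    p₁ * r₂ = p₂ * r₁ := by
  have h₁ : q₁ * (p₁ * r₂ - p₂ * r₁) = 0 := by linear_combination p₁ * hqr + r₁ * hpq
  have h₂ : q₂ * (p₁ * r₂ - p₂ * r₁) = 0 := by linear_combination r₂ * hpq + p₂ * hqr
  rcases hq with hq | hq
  · exact sub_eq_zero.mp ((mul_eq_zero.mp h₁).resolve_left hq)
  · exact sub_eq_zero.mp ((mul_eq_zero.mp h₂).resolve_left hq)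

theorem ne_zero_or_ne_zero_of_add_ne_zero {M : Type*} [AddZeroClass M] {x y : M}
    (h : x + y ≠ 0) : x ≠ 0 ∨ y ≠ 0 := by
  contrapose! h
  simp [h.1, h.2]

theorem eq_of_qBdry_eq_zero {x y z a : ℂ} (h : qBdry x y z a = 0)
    (hc : qBdry x y 1 a - qBdry x y 0 a ≠ 0) : z = x := by
  unfold qBdry at h hc
  have hay : a * y ≠ 0 := fun h' => hc (by linear_combination -h')
  exact (sub_eq_zero.mp ((mul_eq_zero.mp h).resolve_left hay)).symm

theorem eq_of_Qbulk_eq_zero {u p q w w' a b : ℂ} (h : Qbulk u p q w a b = 0)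
    (h' : Qbulk u p q w' a b = 0) (hc : Qbulk u p q 1 a b - Qbulk u p q 0 a b ≠ 0) :
    w = w' := by
  unfold Qbulk at h h' hc
  have hmul : (a * (u - q) - b * (u - p)) * (w' - w) = 0 := by linear_combination h - h'
  have hcoef : a * (u - q) - b * (u - p) ≠ 0 := fun h'' => hc (by linear_combination -h'')
  exact (sub_eq_zero.mp ((mul_eq_zero.mp hmul).resolve_left hcoef)).symm

theorem Qbulk_eq_zero_of_common_diagonal {u v p q r s a b : ℂ}
    (hpq : Qbulk u p q v a b = 0) (hrp : Qbulk u r p v b a = 0) (hsq : Qbulk u s q v a b = 0)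
    (hp : Qbulk u 1 p v b a - Qbulk u 0 p v b a ≠ 0)
    (hq : Qbulk u 1 q v a b - Qbulk u 0 q v a b ≠ 0) :
    Qbulk u r s v b a = 0 := by
  unfold Qbulk at *
  have hp' : a * (p - v) ≠ 0 ∨ b * (u - p) ≠ 0 :=
    ne_zero_or_ne_zero_of_add_ne_zero fun h => hp (by linear_combination h)
  have hq' : q - v ≠ 0 ∨ u - q ≠ 0 := by
    have hcoef : a * (u - q) + b * (q - v) ≠ 0 := fun h => hq (by linear_combination h)
    rcases ne_zero_or_ne_zero_of_add_ne_zero hcoef with h | h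
    exacts [Or.inr (right_ne_zero_of_mul h), Or.inl (right_ne_zero_of_mul h)]
  have hrq : (r - v) * (u - q) = (u - r) * (q - v) :=
    cross_eq_trans (q₁ := a * (p - v)) (q₂ := b * (u - p))
      (by linear_combination hrp) (by linear_combination hpq) hp'
  have hrs : (r - v) * (b * (u - s)) = (u - r) * (a * (s - v)) :=
    cross_eq_trans hrq (by linear_combination -hsq) hq'
  linear_combination hrs

theorem boundary_consistency_stmt_15_general
    (a b : ℂ)
    (x x1 x2 y1 y2 y3 z1 z2 w1 w2 w3 : ℂ)
    -- the eight equations of the scheme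
    (e1 : Qbulk y1 x2 x1 x a b = 0)
    (e2 : qBdry x x1 y2 a = 0)
    (e3 : qBdry x x2 y3 b = 0)
    (e4 : Qbulk y1 z1 x2 y3 (sigmaMap b) a = 0)
    (e5 : Qbulk y1 z2 x1 y2 (sigmaMap a) b = 0)
    (e6 : qBdry y2 z2 w1 b = 0)
    (e7 : qBdry y3 z1 w2 a = 0)
    (e8 : Qbulk y1 z1 z2 w3 (sigmaMap b) (sigmaMap a) = 0)
    -- nonvanishing of the coefficient of the determined variable in each
    -- affine-linear equation (coefficient = value at 1 minus value at 0)
    (c2 : qBdry x x1 1 a - qBdry x x1 0 a ≠ 0)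
    (c3 : qBdry x x2 1 b - qBdry x x2 0 b ≠ 0)
    (c4 : Qbulk y1 1 x2 y3 (sigmaMap b) a - Qbulk y1 0 x2 y3 (sigmaMap b) a ≠ 0)
    (c5 : Qbulk y1 1 x1 y2 (sigmaMap a) b - Qbulk y1 0 x1 y2 (sigmaMap a) b ≠ 0)
    (c6 : qBdry y2 z2 1 b - qBdry y2 z2 0 b ≠ 0)
    (c7 : qBdry y3 z1 1 a - qBdry y3 z1 0 a ≠ 0)
    (c8 : Qbulk y1 z1 z2 1 (sigmaMap b) (sigmaMap a) - Qbulk y1 z1 z2 0 (sigmaMap b) (sigmaMap a) ≠ 0) :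
    w1 = w2 ∧ w2 = w3 := by
  simp only [sigmaMap] at e4 e5 e8 c4 c5 c8
  have hy2 : y2 = x := eq_of_qBdry_eq_zero e2 c2
  have hy3 : y3 = x := eq_of_qBdry_eq_zero e3 c3
  have hw1 : w1 = x := hy2 ▸ eq_of_qBdry_eq_zero e6 c6
  have hw2 : w2 = x := hy3 ▸ eq_of_qBdry_eq_zero e7 c7
  rw [hy3] at e4 c4
  rw [hy2] at e5 c5
  have hdiag : Qbulk y1 z1 z2 x b a = 0 := Qbulk_eq_zero_of_common_diagonal e1 e4 e5 c4 c5
  have hw3 : w3 = x := eq_of_Qbulk_eq_zero e8 hdiag c8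
  exact ⟨hw1.trans hw2.symm, hw2.trans hw3.symm⟩

/-- 3D boundary consistency of the triple (Q, q, σ). -/
theorem boundary_consistency_stmt_15
    (a b : ℂ) (ha : a ≠ 0) (hb : b ≠ 0)
    (x x1 x2 y1 y2 y3 z1 z2 w1 w2 w3 : ℂ)
    -- the eight equations of the scheme
    (e1 : Qbulk y1 x2 x1 x a b = 0)
    (e2 : qBdry x x1 y2 a = 0)
    (e3 : qBdry x x2 y3 b = 0)
    (e4 : Qbulk y1 z1 x2 y3 (sigmaMap b) a = 0)
    (e5 : Qbulk y1 z2 x1 y2 (sigmaMap a) b = 0)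
    (e6 : qBdry y2 z2 w1 b = 0)
    (e7 : qBdry y3 z1 w2 a = 0)
    (e8 : Qbulk y1 z1 z2 w3 (sigmaMap b) (sigmaMap a) = 0)
    -- nonvanishing of the coefficient of the determined variable in each
    -- affine-linear equation (coefficient = value at 1 minus value at 0)
    (c1 : Qbulk 1 x2 x1 x a b - Qbulk 0 x2 x1 x a b ≠ 0)
    (c2 : qBdry x x1 1 a - qBdry x x1 0 a ≠ 0)
    (c3 : qBdry x x2 1 b - qBdry x x2 0 b ≠ 0)
    (c4 : Qbulk y1 1 x2 y3 (sigmaMap b) a - Qbulk y1 0 x2 y3 (sigmaMap b) a ≠ 0)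
    (c5 : Qbulk y1 1 x1 y2 (sigmaMap a) b - Qbulk y1 0 x1 y2 (sigmaMap a) b ≠ 0)
    (c6 : qBdry y2 z2 1 b - qBdry y2 z2 0 b ≠ 0)
    (c7 : qBdry y3 z1 1 a - qBdry y3 z1 0 a ≠ 0)
    (c8 : Qbulk y1 z1 z2 1 (sigmaMap b) (sigmaMap a) - Qbulk y1 z1 z2 0 (sigmaMap b) (sigmaMap a) ≠ 0) :
    w1 = w2 ∧ w2 = w3 :=
  boundary_consistency_stmt_15_general a b x x1 x2 y1 y2 y3 z1 z2 w1 w2 w3 e1 e2 e3 e4 e5 e6 e7 e8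
    c2 c3 c4 c5 c6 c7 c8
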